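/- arXiv:math/0503073 — 7 statements merged into one kernel-verified Lean document; each statement's English description precedes it below -/
import Mathlib

section
/- For any q with q ≠ 1, q^2 ≠ 1, q^3 ≠ 1 and any positive integer n, ∑_{k=0}^{n-1} q^{k+1} [k]_q^2 = (1/3)[n]_q^3 − (1/2)([n]_q^2 − [2n]_q/[2]_q) − (1/3)[3n]_q/[3]_q, where [m]_q = (q^m − 1)/(q − 1). -/
/-!
Expanding `q^(k+1) (q^k - 1)^2 = q (q^(3k) - 2 q^(2k) + q^k)` turns the sum into three geometric
sums with ratios `q^3`, `q^2` and `q`; the theorem is then a rational-function identity in `q`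
and `q^n`.
-/

open Finset

section

variable {K : Type*} [Field K]

theorem sum_pow_succ_mul_sub_one_sq (q : K) (n : ℕ) :
    ∑ k ∈ range n, q ^ (k + 1) * (q ^ k - 1) ^ 2 =
      q * (∑ k ∈ range n, (q ^ 3) ^ k - 2 * ∑ k ∈ range n, (q ^ 2) ^ k
        + ∑ k ∈ range n, q ^ k) := by
  simp only [mul_sum, ← sum_sub_distrib, ← sum_add_distrib]
  exact sum_congr rfl fun k _ => by ring

theorem sum_pow_succ_mul_qint_sq {q : K} (hq : q ≠ 1) (hq2 : q ^ 2 ≠ 1) (hq3 : q ^ 3 ≠ 1)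
    (n : ℕ) :
    ∑ k ∈ range n, q ^ (k + 1) * ((q ^ k - 1) / (q - 1)) ^ 2 =
      q / (q - 1) ^ 2 * (((q ^ 3) ^ n - 1) / (q ^ 3 - 1) - 2 * (((q ^ 2) ^ n - 1) / (q ^ 2 - 1))
        + (q ^ n - 1) / (q - 1)) := by
  simp only [div_pow, ← mul_div_assoc, ← sum_div, sum_pow_succ_mul_sub_one_sq,
    geom_sum_eq hq, geom_sum_eq hq2, geom_sum_eq hq3]
  ring

end

theorem q_sum_squares_general (q : ℝ) (hq : q ≠ 1) (hq2 : q ^ 2 ≠ 1) (hq3 : q ^ 3 ≠ 1)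
    (n : ℕ) :
    ∑ k ∈ Finset.range n, q ^ (k + 1) * ((q ^ k - 1) / (q - 1)) ^ 2 =
      (1 / 3) * ((q ^ n - 1) / (q - 1)) ^ 3
        - (1 / 2) * (((q ^ n - 1) / (q - 1)) ^ 2 -
            ((q ^ (2 * n) - 1) / (q - 1)) / (1 + q))
        - (1 / 3) * (((q ^ (3 * n) - 1) / (q - 1)) / (1 + q + q ^ 2)) := by
  have h1 : q - 1 ≠ 0 := sub_ne_zero.mpr hq
  have h2 : q ^ 2 - 1 ≠ 0 := sub_ne_zero.mpr hq2
  have h3 : q ^ 3 - 1 ≠ 0 := sub_ne_zero.mpr hq3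
  have h2' : 1 + q ≠ 0 := fun h => h2 (by linear_combination (q - 1) * h)
  have h3' : 1 + q + q ^ 2 ≠ 0 := fun h => h3 (by linear_combination (q - 1) * h)
  rw [sum_pow_succ_mul_qint_sq hq hq2 hq3, pow_mul', pow_mul']
  field_simp
  ring

theorem q_sum_squares (q : ℝ) (hq : q ≠ 1) (hq2 : q ^ 2 ≠ 1) (hq3 : q ^ 3 ≠ 1)
    (n : ℕ) (hn : 0 < n) :
    ∑ k ∈ Finset.range n, q ^ (k + 1) * ((q ^ k - 1) / (q - 1)) ^ 2 =
      (1 / 3) * ((q ^ n - 1) / (q - 1)) ^ 3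
        - (1 / 2) * (((q ^ n - 1) / (q - 1)) ^ 2 -
            ((q ^ (2 * n) - 1) / (q - 1)) / (1 + q))
        - (1 / 3) * (((q ^ (3 * n) - 1) / (q - 1)) / (1 + q + q ^ 2)) :=
  q_sum_squares_general q hq hq2 hq3 n
end

section
/- For any q with q ≠ 1, q ≠ −1 and any positive integer n, ∑_{k=1}^{n} q^{2n−2k} (1−q^k)^2 (1−q^{2k}) / ((1−q)^2 (1−q^2)) equals the square of the Gaussian binomial coefficient [n+1 choose 2]_q (Warnaar's q-analogue of the sum of cubes). -/
/-! Clearing denominators, the claim is the polynomial identity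
`S_n (1 - q²) = ((1 - q^(n+1)) (1 - q^n))²` for the numerator sum `S_n`. Since `S_n` has the
Horner form `∑ (q²)^(n-k) a_k`, it satisfies `S_(n+1) = q² S_n + a_(n+1)`, and the identity follows
by induction on `n`. -/

open Finset

theorem sum_Icc_one_pow_sub_mul_succ {R : Type*} [CommSemiring R] (r : R) (f : ℕ → R) (n : ℕ) :
    ∑ k ∈ Icc 1 (n + 1), r ^ (n + 1 - k) * f k =
      r * ∑ k ∈ Icc 1 n, r ^ (n - k) * f k + f (n + 1) := by
  rw [sum_Icc_succ_top (by omega), Nat.sub_self, pow_zero, one_mul, mul_sum]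
  congr 1
  refine sum_congr rfl fun k hk => ?_
  rw [Nat.sub_add_comm (mem_Icc.mp hk).2, pow_succ']
  ring

theorem warnaar_numerator_identity {R : Type*} [CommRing R] (q : R) (n : ℕ) :
    (∑ k ∈ Icc 1 n, q ^ (2 * n - 2 * k) * (1 - q ^ k) ^ 2 * (1 - q ^ (2 * k))) * (1 - q ^ 2) =
      ((1 - q ^ (n + 1)) * (1 - q ^ n)) ^ 2 := by
  simp_rw [← Nat.mul_sub, pow_mul, mul_assoc (_ ^ _)]
  induction n with
  | zero => simp
  | succ n ih =>
    rw [sum_Icc_one_pow_sub_mul_succ, add_mul, mul_assoc, ih]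
    ring

theorem warnaar_q_sum_cubes_general (q : ℝ) (hq : q ≠ 1) (hq' : q ≠ -1) (n : ℕ) :
    ∑ k ∈ Finset.Icc 1 n,
        q ^ (2 * n - 2 * k) * (1 - q ^ k) ^ 2 * (1 - q ^ (2 * k)) /
          ((1 - q) ^ 2 * (1 - q ^ 2)) =
      ((1 - q ^ (n + 1)) * (1 - q ^ n) / ((1 - q) * (1 - q ^ 2))) ^ 2 := by
  have h₁ : 1 - q ≠ 0 := sub_ne_zero.mpr hq.symm
  have h₂ : 1 - q ^ 2 ≠ 0 := by
    rw [sub_ne_zero, ne_comm, Ne, sq_eq_one_iff, not_or]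
    exact ⟨hq, hq'⟩
  rw [← sum_div, div_pow, ← warnaar_numerator_identity]
  field_simp

theorem warnaar_q_sum_cubes (q : ℝ) (hq : q ≠ 1) (hq' : q ≠ -1) (n : ℕ) (hn : 0 < n) :
    ∑ k ∈ Finset.Icc 1 n,
        q ^ (2 * n - 2 * k) * (1 - q ^ k) ^ 2 * (1 - q ^ (2 * k)) /
          ((1 - q) ^ 2 * (1 - q ^ 2)) =
      ((1 - q ^ (n + 1)) * (1 - q ^ n) / ((1 - q) * (1 - q ^ 2))) ^ 2 :=
  warnaar_q_sum_cubes_general q hq hq' n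
end

section
/- For any q with q ≠ 0, q ≠ 1, q ≠ −1 and any positive integer n, ∑_{k=1}^{n} q^{k−1} ((1−q^k)/(1−q))^2 ( (1−q^{k−1})/(1−q^2) + (1−q^{k+1})/(1−q^2) ) equals [n+1 choose 2]_q^2 (Garrett–Hummel q-analogue of the sum of cubes). -/
theorem garrett_hummel_q_sum_cubes (q : ℝ) (hq0 : q ≠ 0) (hq : q ≠ 1) (hq' : q ≠ -1)
    (n : ℕ) (hn : 0 < n) :
    ∑ k ∈ Finset.Icc 1 n,
        q ^ (k - 1) * ((1 - q ^ k) / (1 - q)) ^ 2 *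
          ((1 - q ^ (k - 1)) / (1 - q ^ 2) + (1 - q ^ (k + 1)) / (1 - q ^ 2)) =
      ((1 - q ^ (n + 1)) * (1 - q ^ n) / ((1 - q) * (1 - q ^ 2))) ^ 2 := by
  have h1 : (1 : ℝ) - q ≠ 0 := by intro h; apply hq; linarith
  have h2 : (1 : ℝ) - q ^ 2 ≠ 0 := by
    intro h
    have : (1 - q) * (1 + q) = 0 := by ring_nf; linarith [h]
    rcases mul_eq_zero.mp this with h' | h'
    · exact h1 h'
    · exact hq' (by linarith)
  induction n with
  | zero => exact absurd hn (lt_irrefl 0)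
  | succ m ih =>
    rcases Nat.eq_zero_or_pos m with hm | hm
    · subst hm
      simp
      field_simp
    · rw [Finset.sum_Icc_succ_top (by omega : 1 ≤ m + 1), ih hm]
      have e1 : m + 1 - 1 = m := by omega
      rw [e1]
      field_simp
      ring
end

section
/- For any positive real q with q ≠ 1 and any positive integer n, ∑_{k=1}^{n} [k]_{q^2} [k]_q q^{(3/2)(n−k)} = [n]_q [n+1]_q [n + 1/2]_q / ([1]_q [2]_q [3/2]_q), where for a real exponent a, [a]_q = (q^a − 1)/(q − 1) (Schlosser's q-analogue of the sum of squares, case m = 2). -/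
private lemma schlosser_aux (s : ℝ) (hs0 : 0 < s) (hs : s ≠ 1) (n : ℕ) (hn : 0 < n) :
    ∑ k ∈ Finset.Icc 1 n,
        ((s ^ (4 * k) - 1) / (s ^ 4 - 1)) * ((s ^ (2 * k) - 1) / (s ^ 2 - 1)) *
          s ^ (3 * (n - k)) =
      (((s ^ (2 * n) - 1) / (s ^ 2 - 1)) * ((s ^ (2 * n + 2) - 1) / (s ^ 2 - 1)) *
          ((s ^ (2 * n + 1) - 1) / (s ^ 2 - 1))) /
        (((s ^ 2 - 1) / (s ^ 2 - 1)) * ((s ^ 4 - 1) / (s ^ 2 - 1)) *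
          ((s ^ 3 - 1) / (s ^ 2 - 1))) := by
  have hs1 : s - 1 ≠ 0 := sub_ne_zero.mpr hs
  have h2 : s ^ 2 - 1 ≠ 0 := by
    have : s ^ 2 - 1 = (s - 1) * (s + 1) := by ring
    rw [this]; positivity
  have h4 : s ^ 4 - 1 ≠ 0 := by
    have : s ^ 4 - 1 = (s ^ 2 - 1) * (s ^ 2 + 1) := by ring
    rw [this]; positivity
  have h3 : s ^ 3 - 1 ≠ 0 := by
    have : s ^ 3 - 1 = (s - 1) * (s ^ 2 + s + 1) := by ring
    rw [this]; positivity
  induction n, hn using Nat.le_induction with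
  | base =>
      rw [Finset.Icc_self, Finset.sum_singleton]
      field_simp
      simp
  | succ n hn IH =>
      rw [Finset.sum_Icc_succ_top (by omega : 1 ≤ n + 1)]
      have hcong : ∀ k ∈ Finset.Icc 1 n,
          ((s ^ (4 * k) - 1) / (s ^ 4 - 1)) * ((s ^ (2 * k) - 1) / (s ^ 2 - 1)) *
            s ^ (3 * (n + 1 - k)) =
          s ^ 3 * (((s ^ (4 * k) - 1) / (s ^ 4 - 1)) * ((s ^ (2 * k) - 1) / (s ^ 2 - 1)) *
            s ^ (3 * (n - k))) := by
        intro k hk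
        have hk' : k ≤ n := (Finset.mem_Icc.mp hk).2
        have he : 3 * (n + 1 - k) = 3 + 3 * (n - k) := by omega
        rw [he, pow_add]; ring
      rw [Finset.sum_congr rfl hcong, ← Finset.mul_sum, IH]
      simp only [Nat.sub_self, Nat.mul_zero, pow_zero, mul_one]
      field_simp
      ring

theorem schlosser_q_sum_m2 (q : ℝ) (hq0 : 0 < q) (hq : q ≠ 1) (n : ℕ) (hn : 0 < n) :
    ∑ k ∈ Finset.Icc 1 n,
        ((q ^ (2 * k) - 1) / (q ^ 2 - 1)) * ((q ^ k - 1) / (q - 1)) *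
          q ^ ((3 / 2 : ℝ) * ((n : ℝ) - (k : ℝ))) =
      (((q ^ n - 1) / (q - 1)) * ((q ^ (n + 1) - 1) / (q - 1)) *
          ((q ^ ((n : ℝ) + 1 / 2) - 1) / (q - 1))) /
        (((q ^ (1 : ℕ) - 1) / (q - 1)) * ((q ^ (2 : ℕ) - 1) / (q - 1)) *
          ((q ^ ((3 : ℝ) / 2) - 1) / (q - 1))) := by
  set s : ℝ := q ^ ((1 : ℝ) / 2) with hsdef
  have hs0 : 0 < s := Real.rpow_pos_of_pos hq0 _
  have hpow : ∀ m : ℕ, s ^ m = q ^ ((m : ℝ) / 2) := by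
    intro m
    rw [hsdef, ← Real.rpow_natCast (q ^ ((1 : ℝ) / 2)) m, ← Real.rpow_mul hq0.le]
    ring_nf
  have hs2 : s ^ 2 = q := by
    rw [hpow]; norm_num
  have hs : s ≠ 1 := by
    intro h
    apply hq
    rw [← hs2, h, one_pow]
  have key := schlosser_aux s hs0 hs n hn
  have e1 : ∀ k ∈ Finset.Icc 1 n,
      ((q ^ (2 * k) - 1) / (q ^ 2 - 1)) * ((q ^ k - 1) / (q - 1)) *
        q ^ ((3 / 2 : ℝ) * ((n : ℝ) - (k : ℝ))) =
      ((s ^ (4 * k) - 1) / (s ^ 4 - 1)) * ((s ^ (2 * k) - 1) / (s ^ 2 - 1)) *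
        s ^ (3 * (n - k)) := by
    intro k hk
    have hk' : k ≤ n := (Finset.mem_Icc.mp hk).2
    have hrp : q ^ ((3 / 2 : ℝ) * ((n : ℝ) - (k : ℝ))) = s ^ (3 * (n - k)) := by
      rw [hpow]
      congr 1
      push_cast [Nat.cast_sub hk']
      ring
    rw [hrp, ← hs2]
    ring_nf
  have e2 : q ^ ((n : ℝ) + 1 / 2) = s ^ (2 * n + 1) := by
    rw [hpow]; congr 1; push_cast; ring
  have e3 : q ^ ((3 : ℝ) / 2) = s ^ 3 := by
    rw [hpow]; norm_num
  rw [Finset.sum_congr rfl e1, key, e2, e3, show q = s ^ 2 from hs2.symm]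
  ring_nf
end

section
/- For any q with q ≠ 0, q ≠ 1, q ≠ −1 and any positive integer n, ∑_{k=1}^{n} [k]_{q^2} [k]_q^2 q^{2(n−k)} = [n+1 choose 2]_q^2 (Schlosser's q-analogue of the sum of cubes, case m = 3). -/
theorem schlosser_q_sum_m3 (q : ℝ) (hq0 : q ≠ 0) (hq : q ≠ 1) (hq' : q ≠ -1)
    (n : ℕ) (hn : 0 < n) :
    ∑ k ∈ Finset.Icc 1 n,
        ((q ^ (2 * k) - 1) / (q ^ 2 - 1)) * ((q ^ k - 1) / (q - 1)) ^ 2 *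
          q ^ (2 * (n - k)) =
      ((1 - q ^ (n + 1)) * (1 - q ^ n) / ((1 - q) * (1 - q ^ 2))) ^ 2 := by
  have hq1 : q - 1 ≠ 0 := sub_ne_zero.mpr hq
  have hq2 : q ^ 2 - 1 ≠ 0 := by
    intro h
    have : (q - 1) * (q + 1) = 0 := by ring_nf; linarith [h]
    rcases mul_eq_zero.mp this with h1 | h1
    · exact hq1 h1
    · exact hq' (by linarith)
  have h1q : (1 : ℝ) - q ≠ 0 := fun h => hq1 (by linarith)
  have h1q2 : (1 : ℝ) - q ^ 2 ≠ 0 := fun h => hq2 (by linarith)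
  induction n with
  | zero => exact absurd hn (lt_irrefl 0)
  | succ n ih =>
    rcases Nat.eq_zero_or_pos n with h0 | hpos
    · subst h0
      simp only [Finset.Icc_self, Finset.sum_singleton]
      norm_num
      field_simp
    · rw [Finset.sum_Icc_succ_top (by omega : 1 ≤ n + 1)]
      have hsum : ∑ k ∈ Finset.Icc 1 n,
          ((q ^ (2 * k) - 1) / (q ^ 2 - 1)) * ((q ^ k - 1) / (q - 1)) ^ 2 *
            q ^ (2 * (n + 1 - k)) =
          q ^ 2 * ∑ k ∈ Finset.Icc 1 n,
          ((q ^ (2 * k) - 1) / (q ^ 2 - 1)) * ((q ^ k - 1) / (q - 1)) ^ 2 *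
            q ^ (2 * (n - k)) := by
        rw [Finset.mul_sum]
        apply Finset.sum_congr rfl
        intro k hk
        have hk' : k ≤ n := (Finset.mem_Icc.mp hk).2
        have : n + 1 - k = (n - k) + 1 := by omega
        rw [this]
        ring
      rw [hsum, ih hpos]
      have hA : q ^ (2 * (n + 1)) = (q ^ (n + 1)) ^ 2 := by rw [← pow_mul]; ring_nf
      have hB : q ^ (n + 1 + 1) = q * q ^ (n + 1) := by ring
      have hC : q ^ (n + 1) = q * q ^ n := by ring
      rw [Nat.sub_self, mul_zero, pow_zero, hA, hB, hC]
      field_simp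
      ring
end

section
/- For any positive real q with q ≠ 1 and any positive integer n, ∑_{k=1}^{n} [k]_{q^2} [k]_q^3 q^{(5/2)(n−k)} = [(1−q^n)(1−q^{n+1})(1−q^{n+1/2}) / ((1−q)(1−q^2)(1−q^{5/2}))] · [ (1−q^n)(1−q^{n+1})/(1−q)^2 − q^n (1−q^{1/2})/(1−q^{3/2}) ] (Schlosser's q-analogue of the sum of fourth powers, case m = 4). -/
/-!
Substituting `s = √q` turns every power of `q`, including the half-integer ones, into a
natural power of `s`, and the claim becomes an identity of rational functions in `s` and
`t = s ^ n`. That identity is proved by induction on `n`: passing from `n` to `n + 1` multiplies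
every old summand by `q ^ (5/2) = s ^ 5` and adds the summand `k = n + 1`, so it suffices that
the right-hand side satisfies the same recursion under `t ↦ t * s`, which is a rational
function identity checked by clearing denominators.
-/

open Finset

variable {K : Type*} [Field K]

/-- The right-hand side of Schlosser's formula for `m = 4`, written with `q = s ^ 2` and
`t = s ^ n`. -/
def schlosserRHS (s t : K) : K :=
  (1 - t ^ 2) * (1 - t ^ 2 * s ^ 2) * (1 - t ^ 2 * s) / ((1 - s ^ 2) * (1 - s ^ 4) * (1 - s ^ 5)) *
    ((1 - t ^ 2) * (1 - t ^ 2 * s ^ 2) / (1 - s ^ 2) ^ 2 - t ^ 2 * (1 - s) / (1 - s ^ 3))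

/-- The summand `[k]_{q^2} [k]_q^3` with `q = s ^ 2` and `u = s ^ k`. -/
def schlosserTerm (s u : K) : K :=
  (u ^ 4 - 1) / (s ^ 4 - 1) * ((u ^ 2 - 1) / (s ^ 2 - 1)) ^ 3

variable {s : K}

theorem schlosserRHS_one : schlosserRHS s 1 = 0 := by
  simp [schlosserRHS]

theorem schlosserRHS_mul_right (h3 : 1 - s ^ 3 ≠ 0) (h4 : 1 - s ^ 4 ≠ 0) (h5 : 1 - s ^ 5 ≠ 0)
    (t : K) :
    schlosserRHS s (t * s) = s ^ 5 * schlosserRHS s t + schlosserTerm s (t * s) := by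
  have h2 : 1 - s ^ 2 ≠ 0 :=
    left_ne_zero_of_mul (b := 1 + s ^ 2) <| by
      rwa [show (1 - s ^ 2) * (1 + s ^ 2) = 1 - s ^ 4 by ring]
  have h2' : s ^ 2 - 1 ≠ 0 := by rwa [← neg_sub, neg_ne_zero]
  have h4' : s ^ 4 - 1 ≠ 0 := by rwa [← neg_sub, neg_ne_zero]
  unfold schlosserRHS schlosserTerm
  field_simp
  ring

theorem sum_Icc_schlosserTerm (h3 : 1 - s ^ 3 ≠ 0) (h4 : 1 - s ^ 4 ≠ 0) (h5 : 1 - s ^ 5 ≠ 0)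
    (n : ℕ) :
    ∑ k ∈ Icc 1 n, schlosserTerm s (s ^ k) * s ^ (5 * (n - k)) = schlosserRHS s (s ^ n) := by
  induction n with
  | zero => simp [schlosserRHS_one]
  | succ n ih =>
    have hshift : ∑ k ∈ Icc 1 n, schlosserTerm s (s ^ k) * s ^ (5 * (n + 1 - k)) =
        s ^ 5 * ∑ k ∈ Icc 1 n, schlosserTerm s (s ^ k) * s ^ (5 * (n - k)) := by
      rw [mul_sum]
      refine sum_congr rfl fun k hk => ?_
      rw [show 5 * (n + 1 - k) = 5 + 5 * (n - k) by have := (mem_Icc.mp hk).2; omega, pow_add]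
      ring
    rw [sum_Icc_succ_top (by omega), hshift, ih, Nat.sub_self, mul_zero, pow_zero, mul_one,
      pow_succ s n, schlosserRHS_mul_right h3 h4 h5]

theorem schlosser_q_sum_m4_general (q : ℝ) (hq0 : 0 < q) (hq : q ≠ 1) (n : ℕ) :
    ∑ k ∈ Finset.Icc 1 n,
        ((q ^ (2 * k) - 1) / (q ^ 2 - 1)) * ((q ^ k - 1) / (q - 1)) ^ 3 *
          q ^ ((5 / 2 : ℝ) * ((n : ℝ) - (k : ℝ))) =
      ((1 - q ^ n) * (1 - q ^ (n + 1)) * (1 - q ^ ((n : ℝ) + 1 / 2)) /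
          ((1 - q) * (1 - q ^ 2) * (1 - q ^ ((5 : ℝ) / 2)))) *
        ((1 - q ^ n) * (1 - q ^ (n + 1)) / (1 - q) ^ 2 -
          q ^ n * (1 - q ^ ((1 : ℝ) / 2)) / (1 - q ^ ((3 : ℝ) / 2))) := by
  set s := √q
  have hq_sq : q = s ^ 2 := (Real.sq_sqrt hq0.le).symm
  have hrpow (m : ℕ) : q ^ ((m : ℝ) / 2) = s ^ m := by
    rw [Real.rpow_div_two_eq_sqrt _ hq0.le, Real.rpow_natCast]
  have hs1 : s ≠ 1 := fun h => hq (by rw [hq_sq, h, one_pow])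
  have hs (m : ℕ) (hm : m ≠ 0) : 1 - s ^ m ≠ 0 :=
    sub_ne_zero.mpr (Ne.symm ((pow_eq_one_iff_of_nonneg (Real.sqrt_nonneg q) hm).not.mpr hs1))
  have hterm (k : ℕ) (hk : k ∈ Icc 1 n) :
      ((q ^ (2 * k) - 1) / (q ^ 2 - 1)) * ((q ^ k - 1) / (q - 1)) ^ 3 *
        q ^ ((5 / 2 : ℝ) * ((n : ℝ) - (k : ℝ))) =
        schlosserTerm s (s ^ k) * s ^ (5 * (n - k)) := by
    rw [show (5 / 2 : ℝ) * ((n : ℝ) - (k : ℝ)) = ((5 * (n - k) : ℕ) : ℝ) / 2 by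
      push_cast [Nat.cast_sub (mem_Icc.mp hk).2]; ring, hrpow, schlosserTerm, hq_sq]
    ring
  rw [sum_congr rfl hterm, sum_Icc_schlosserTerm (hs 3 (by norm_num)) (hs 4 (by norm_num))
    (hs 5 (by norm_num)), schlosserRHS,
    show (n : ℝ) + 1 / 2 = ((2 * n + 1 : ℕ) : ℝ) / 2 by push_cast; ring,
    show (1 : ℝ) / 2 = ((1 : ℕ) : ℝ) / 2 by norm_num,
    show (3 : ℝ) / 2 = ((3 : ℕ) : ℝ) / 2 by norm_num,
    show (5 : ℝ) / 2 = ((5 : ℕ) : ℝ) / 2 by norm_num, hrpow, hrpow, hrpow, hrpow, hq_sq]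
  ring

theorem schlosser_q_sum_m4 (q : ℝ) (hq0 : 0 < q) (hq : q ≠ 1) (n : ℕ) (hn : 0 < n) :
    ∑ k ∈ Finset.Icc 1 n,
        ((q ^ (2 * k) - 1) / (q ^ 2 - 1)) * ((q ^ k - 1) / (q - 1)) ^ 3 *
          q ^ ((5 / 2 : ℝ) * ((n : ℝ) - (k : ℝ))) =
      ((1 - q ^ n) * (1 - q ^ (n + 1)) * (1 - q ^ ((n : ℝ) + 1 / 2)) /
          ((1 - q) * (1 - q ^ 2) * (1 - q ^ ((5 : ℝ) / 2)))) *
        ((1 - q ^ n) * (1 - q ^ (n + 1)) / (1 - q) ^ 2 -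
          q ^ n * (1 - q ^ ((1 : ℝ) / 2)) / (1 - q ^ ((3 : ℝ) / 2))) :=
  schlosser_q_sum_m4_general q hq0 hq n
end

section
/- For any q with q ≠ 0, q ≠ 1, q^2 ≠ 1, q^3 ≠ 1 and any positive integer n, ∑_{k=1}^{n} [k]_{q^2} [k]_q^4 q^{3(n−k)} = [(1−q^n)^2 (1−q^{n+1})^2 / ((1−q)^2 (1−q^2)(1−q^3))] · [ (1−q^n)(1−q^{n+1})/(1−q)^2 − q^n (1−q)/(1−q^2) ] (Schlosser's q-analogue of the sum of fifth powers, case m = 5). -/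
/-! The partial sums `S n` of the left-hand side satisfy `S (n + 1) = q³ S n + [n+1]_{q²} [n+1]_q⁴`
with `S 0 = 0`; the right-hand side satisfies the same recurrence, which after clearing
denominators is a polynomial identity in `q` and `qⁿ`. -/

theorem Finset.sum_Icc_mul_pow_sub_eq_of_succ {R : Type*} [CommSemiring R] (f F : ℕ → R) (r : R)
    (h0 : F 0 = 0) (hsucc : ∀ n, F (n + 1) = r * F n + f (n + 1)) (n : ℕ) :
    ∑ k ∈ Finset.Icc 1 n, f k * r ^ (n - k) = F n := by
  induction n with
  | zero => simp [h0]
  | succ n ih =>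
    have hshift : ∀ k ∈ Finset.Icc 1 n, f k * r ^ (n + 1 - k) = r * (f k * r ^ (n - k)) := by
      intro k hk
      rw [Nat.sub_add_comm (Finset.mem_Icc.1 hk).2, pow_succ]
      ring
    rw [Finset.sum_Icc_succ_top (Nat.le_add_left 1 n), Finset.sum_congr rfl hshift,
      ← Finset.mul_sum, ih, hsucc, Nat.sub_self, pow_zero, mul_one]

section Schlosser

variable {K : Type*} [Field K]

def schlosserSumFive (q : K) (n : ℕ) : K :=
  ((1 - q ^ n) ^ 2 * (1 - q ^ (n + 1)) ^ 2 / ((1 - q) ^ 2 * (1 - q ^ 2) * (1 - q ^ 3))) *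
    ((1 - q ^ n) * (1 - q ^ (n + 1)) / (1 - q) ^ 2 - q ^ n * (1 - q) / (1 - q ^ 2))

theorem schlosserSumFive_zero (q : K) : schlosserSumFive q 0 = 0 := by
  simp [schlosserSumFive]

theorem schlosserSumFive_succ (q : K) (hq : q ≠ 1) (hq2 : q ^ 2 ≠ 1) (hq3 : q ^ 3 ≠ 1) (n : ℕ) :
    schlosserSumFive q (n + 1) =
      q ^ 3 * schlosserSumFive q n +
        (q ^ (2 * (n + 1)) - 1) / (q ^ 2 - 1) * ((q ^ (n + 1) - 1) / (q - 1)) ^ 4 := by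
  have h1 : 1 - q ≠ 0 := sub_ne_zero.2 hq.symm
  have h2 : 1 - q ^ 2 ≠ 0 := sub_ne_zero.2 hq2.symm
  have h3 : 1 - q ^ 3 ≠ 0 := sub_ne_zero.2 hq3.symm
  have h1' : q - 1 ≠ 0 := sub_ne_zero.2 hq
  have h2' : q ^ 2 - 1 ≠ 0 := sub_ne_zero.2 hq2
  simp only [schlosserSumFive, pow_mul, pow_succ]
  field_simp
  ring

end Schlosser

theorem schlosser_q_sum_m5_general (q : ℝ) (hq : q ≠ 1) (hq2 : q ^ 2 ≠ 1)
    (hq3 : q ^ 3 ≠ 1) (n : ℕ) :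
    ∑ k ∈ Finset.Icc 1 n,
        ((q ^ (2 * k) - 1) / (q ^ 2 - 1)) * ((q ^ k - 1) / (q - 1)) ^ 4 *
          q ^ (3 * (n - k)) =
      ((1 - q ^ n) ^ 2 * (1 - q ^ (n + 1)) ^ 2 /
          ((1 - q) ^ 2 * (1 - q ^ 2) * (1 - q ^ 3))) *
        ((1 - q ^ n) * (1 - q ^ (n + 1)) / (1 - q) ^ 2 -
          q ^ n * (1 - q) / (1 - q ^ 2)) := by
  simp only [pow_mul q 3]
  exact Finset.sum_Icc_mul_pow_sub_eq_of_succ _ (schlosserSumFive q) _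
    (schlosserSumFive_zero q) (schlosserSumFive_succ q hq hq2 hq3) n

theorem schlosser_q_sum_m5 (q : ℝ) (hq0 : q ≠ 0) (hq : q ≠ 1) (hq2 : q ^ 2 ≠ 1)
    (hq3 : q ^ 3 ≠ 1) (n : ℕ) (hn : 0 < n) :
    ∑ k ∈ Finset.Icc 1 n,
        ((q ^ (2 * k) - 1) / (q ^ 2 - 1)) * ((q ^ k - 1) / (q - 1)) ^ 4 *
          q ^ (3 * (n - k)) =
      ((1 - q ^ n) ^ 2 * (1 - q ^ (n + 1)) ^ 2 /
          ((1 - q) ^ 2 * (1 - q ^ 2) * (1 - q ^ 3))) *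
        ((1 - q ^ n) * (1 - q ^ (n + 1)) / (1 - q) ^ 2 -
          q ^ n * (1 - q) / (1 - q ^ 2)) :=
  schlosser_q_sum_m5_general q hq hq2 hq3 n
end
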